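/- arXiv:2601.01735 — 3 statements merged into one kernel-verified Lean document; each statement's English description precedes it below -/
import Mathlib

section
/- Let R ⊆ X × LO be an analytic, refining family indexed by linear orders (i.e., R_I ⊇ R_{I'} whenever I embeds into I'), where X is an analytic subset of a standard Borel space. If the section R_α is nonempty for every countable ordinal α < ω₁, then the section R_{ω*} is nonempty, where ω* denotes the reversed order on ω. -/
/-- A subset of a measurable space is *analytic* if it is the image of a Borel
subset of Baire space under a Borel map. -/
def IsAnalyticSet {X : Type*} [MeasurableSpace X] (s : Set X) : Prop :=
  ∃ (B : Set (ℕ → ℕ)) (f : (ℕ → ℕ) → X), MeasurableSet B ∧ Measurable f ∧ f '' B = s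

/-- Codes for linear orders on subsets of ω. -/
abbrev LOCode : Type := (ℕ → Bool) × (ℕ × ℕ → Bool)

namespace LOCode

def dom (I : LOCode) (n : ℕ) : Prop := I.1 n = true

def le (I : LOCode) (m n : ℕ) : Prop := I.2 (m, n) = true

def IsLO (I : LOCode) : Prop :=
  (∀ m n, I.le m n → I.dom m ∧ I.dom n) ∧
  (∀ m, I.dom m → I.le m m) ∧
  (∀ m n, I.le m n → I.le n m → m = n) ∧
  (∀ m n k, I.le m n → I.le n k → I.le m k) ∧
  (∀ m n, I.dom m → I.dom n → I.le m n ∨ I.le n m)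

def IsWO (I : LOCode) : Prop :=
  I.IsLO ∧ ∀ s : Set ℕ, s.Nonempty → (∀ n ∈ s, I.dom n) → ∃ m ∈ s, ∀ n ∈ s, I.le m n

/-- `I` embeds (as a linear order) into `J`. -/
def Embeds (I J : LOCode) : Prop :=
  ∃ f : ℕ → ℕ, (∀ n, I.dom n → J.dom (f n)) ∧
    ∀ m n, I.dom m → I.dom n → (I.le m n ↔ J.le (f m) (f n))

/-- `ω*`, the reversed order on all of ω. -/
def omegaStar : LOCode := (fun _ => true, fun p => decide (p.2 ≤ p.1))

end LOCode

section LSAux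

namespace LSProof

open MeasureTheory Filter

/-- Kleene–Brouwer strict order on finite sequences: extensions are smaller,
otherwise compare at the first difference. -/
def klt : List ℕ → List ℕ → Prop
  | [], _ => False
  | _ :: _, [] => True
  | a :: s, b :: t => a < b ∨ (a = b ∧ klt s t)

lemma klt_irrefl : ∀ s, ¬ klt s s
  | [] => by simp [klt]
  | a :: s => by
    simp only [klt]
    rintro (h | ⟨-, h⟩)
    · exact lt_irrefl _ h
    · exact klt_irrefl s h

lemma klt_trans : ∀ s t u, klt s t → klt t u → klt s u
  | [], _, _, h, _ => h.elim
  | _ :: _, [], _, _, h => h.elim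
  | _ :: _, _ :: _, [], _, _ => trivial
  | a :: s, b :: t, c :: u, h1, h2 => by
    rcases h1 with h1 | ⟨rfl, h1⟩ <;> rcases h2 with h2 | ⟨rfl, h2⟩
    · exact Or.inl (h1.trans h2)
    · exact Or.inl h1
    · exact Or.inl h2
    · exact Or.inr ⟨rfl, klt_trans _ _ _ h1 h2⟩

lemma klt_total : ∀ s t : List ℕ, s ≠ t → klt s t ∨ klt t s
  | [], [] , h => absurd rfl h
  | [], _ :: _, _ => Or.inr trivial
  | _ :: _, [], _ => Or.inl trivial
  | a :: s, b :: t, h => by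
    rcases lt_trichotomy a b with hab | rfl | hab
    · exact Or.inl (Or.inl hab)
    · have : s ≠ t := fun hst => h (by rw [hst])
      rcases klt_total s t this with h' | h'
      · exact Or.inl (Or.inr ⟨rfl, h'⟩)
      · exact Or.inr (Or.inr ⟨rfl, h'⟩)
    · exact Or.inr (Or.inl hab)

lemma klt_of_prefix : ∀ p s : List ℕ, p <+: s → s ≠ p → klt s p
  | [], [], _, h => absurd rfl h
  | [], _ :: _, _, _ => trivial
  | _ :: _, [], h, _ => by
    rcases h with ⟨r, hr⟩; simp at hr
  | a :: p, s, h, hne => by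
    rcases h with ⟨r, hr⟩
    subst hr
    refine Or.inr ⟨rfl, klt_of_prefix p (p ++ r) ⟨r, rfl⟩ ?_⟩
    intro hpr
    exact hne (by rw [List.cons_append, hpr])

lemma not_klt_of_prefix : ∀ p s : List ℕ, p <+: s → ¬ klt p s
  | [], _, _, h => h
  | a :: p, s, hp, h => by
    rcases hp with ⟨r, hr⟩
    subst hr
    rcases h with h | ⟨-, h⟩
    · exact lt_irrefl _ h
    · exact not_klt_of_prefix p (p ++ r) ⟨r, rfl⟩ h

lemma klt_head_le : ∀ p : List ℕ, ∀ a b : ℕ, ∀ s t : List ℕ,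
    klt (p ++ a :: s) (p ++ b :: t) → a ≤ b
  | [], a, b, s, t, h => by
    rcases h with h | ⟨rfl, -⟩
    · exact h.le
    · exact le_rfl
  | c :: p, a, b, s, t, h => by
    rcases h with h | ⟨-, h⟩
    · exact absurd h (lt_irrefl _)
    · exact klt_head_le p a b s t h

lemma klt_chain {h : ℕ → List ℕ} (hd : ∀ n, klt (h (n + 1)) (h n)) :
    ∀ m n, m < n → klt (h n) (h m) := by
  intro m n hmn
  induction n with
  | zero => omega
  | succ k ih =>
    rcases Nat.lt_succ_iff_lt_or_eq.mp hmn with h' | rfl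
    · exact klt_trans _ _ _ (hd k) (ih h')
    · exact hd m

/-- The restriction of `x : ℕ → ℕ` to `{0, …, n-1}`, as a list. -/
def res (x : ℕ → ℕ) (n : ℕ) : List ℕ := List.ofFn fun i : Fin n => x i

@[simp] lemma res_length (x : ℕ → ℕ) (n : ℕ) : (res x n).length = n := by
  simp [res]

lemma res_succ (x : ℕ → ℕ) (n : ℕ) : res x (n + 1) = res x n ++ [x n] := by
  rw [res, List.ofFn_succ']; simp [List.concat_eq_append, res]

lemma res_take (x : ℕ → ℕ) {k n : ℕ} (h : k ≤ n) : (res x n).take k = res x k := by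
  apply List.ext_getElem <;> simp [res] <;> omega

lemma res_eq_res {w z : ℕ → ℕ} {n : ℕ} (h : res w n = res z n) {i : ℕ} (hi : i < n) :
    w i = z i := by
  have := List.ofFn_inj.mp h
  exact congrFun this ⟨i, hi⟩

/-- Auxiliary predicate: below `p` there is an infinite strictly KB-descending
sequence in `T` of proper extensions of `p`. -/
def Pgood (T : List ℕ → Prop) (p : List ℕ) : Prop :=
  ∃ h : ℕ → List ℕ, (∀ n, T (h n)) ∧ (∀ n, klt (h (n + 1)) (h n)) ∧
    ∀ n, p <+: h n ∧ h n ≠ p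

lemma Pgood.T_self {T : List ℕ → Prop} (Tcl : ∀ t k, T t → T (t.take k)) {p : List ℕ}
    (hp : Pgood T p) : T p := by
  obtain ⟨h, hT, -, hpre⟩ := hp
  have h1 : p = (h 0).take p.length := List.prefix_iff_eq_take.mp (hpre 0).1
  rw [h1]; exact Tcl _ _ (hT 0)

lemma Pgood.step {T : List ℕ → Prop} {p : List ℕ} (hp : Pgood T p) :
    ∃ a, Pgood T (p ++ [a]) := by
  classical
  obtain ⟨h, hT, hd, hpre⟩ := hp
  have hcs : ∀ n, ∃ cs : ℕ × List ℕ, h n = p ++ cs.1 :: cs.2 := by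
    intro n
    obtain ⟨r, hr⟩ := (hpre n).1
    match r, hr with
    | [], hr => exact absurd (by simpa using hr.symm) (hpre n).2
    | c :: s, hr => exact ⟨(c, s), hr.symm⟩
  choose cs hcs using hcs
  set c : ℕ → ℕ := fun n => (cs n).1 with hc
  have hantitone : Antitone c := by
    apply antitone_nat_of_succ_le
    intro n
    exact klt_head_le p _ _ _ _ (by rw [← hcs n, ← hcs (n+1)]; exact hd n)
  -- c stabilizes
  obtain ⟨N, hN⟩ : ∃ N, ∀ n, N ≤ n → c n = c N := by
    have hmem : sInf (Set.range c) ∈ Set.range c :=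
      Nat.sInf_mem (Set.range_nonempty c)
    obtain ⟨N, hNc⟩ := hmem
    refine ⟨N, fun n hn => le_antisymm (hantitone hn) ?_⟩
    rw [hNc]
    exact Nat.sInf_le ⟨n, rfl⟩
  refine ⟨c N, ?_⟩
  set q : List ℕ := p ++ [c N] with hq
  have hqpre : ∀ n, N ≤ n → q <+: h n := by
    intro n hn
    rw [hcs n, hq]
    have : c n = c N := hN n hn
    exact ⟨(cs n).2, by rw [← this]; simp; rfl⟩
  -- a starting point beyond which the sequence never equals `q`
  have key : ∃ M, N ≤ M ∧ ∀ n, M ≤ n → h n ≠ q := by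
    by_cases hex : ∃ n, N ≤ n ∧ h n = q
    · obtain ⟨n0, hn0, hq0⟩ := hex
      refine ⟨n0 + 1, by omega, fun n hn hcontra => ?_⟩
      have : klt (h n) (h n0) := klt_chain hd n0 n (by omega)
      rw [hcontra, hq0] at this
      exact klt_irrefl _ this
    · push_neg at hex
      exact ⟨N, le_rfl, fun n hn => hex n hn⟩
  obtain ⟨M, hNM, hM⟩ := key
  refine ⟨fun n => h (M + n), fun n => hT _, fun n => ?_, fun n => ?_⟩
  · exact hd (M + n)
  · exact ⟨hqpre _ (by omega), hM _ (by omega)⟩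

/-- A strictly KB-descending sequence through a prefix-closed tree yields an
infinite branch. -/
lemma branch_of_descending {T : List ℕ → Prop} (Tcl : ∀ t k, T t → T (t.take k))
    {h : ℕ → List ℕ} (hT : ∀ n, T (h n)) (hd : ∀ n, klt (h (n + 1)) (h n)) :
    ∃ z : ℕ → ℕ, ∀ n, T (res z n) := by
  classical
  have base : Pgood T [] := by
    refine ⟨fun n => h (n + 1), fun n => hT _, fun n => hd _, fun n => ⟨List.nil_prefix, ?_⟩⟩
    intro hcontra
    replace hcontra : h (n + 1) = [] := hcontra
    have := hd n
    rw [hcontra] at this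
    exact this
  let L : ℕ → {l : List ℕ // Pgood T l} := fun n =>
    Nat.rec ⟨[], base⟩
      (fun _ ih => ⟨ih.1 ++ [Classical.choose ih.2.step], Classical.choose_spec ih.2.step⟩) n
  have hLsucc : ∀ n, (L (n + 1)).1 = (L n).1 ++ [Classical.choose (L n).2.step] := fun n => rfl
  have hLlen : ∀ n, (L n).1.length = n := by
    intro n
    induction n with
    | zero => rfl
    | succ k ih => rw [hLsucc k]; simp [ih]
  have hgetD : ∀ (l : List ℕ) (a d n : ℕ), l.length = n → (l ++ [a]).getD n d = a := by
    rintro l a d n rfl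
    simp [List.getD, List.getElem?_append_right le_rfl]
  refine ⟨fun n => (L (n + 1)).1.getD n 0, fun n => ?_⟩
  have hres : ∀ n, res (fun n => (L (n + 1)).1.getD n 0) n = (L n).1 := by
    intro n
    induction n with
    | zero => rfl
    | succ k ih =>
      rw [res_succ, ih]
      show (L k).1 ++ [(L (k + 1)).1.getD k 0] = (L (k + 1)).1
      rw [hLsucc k, hgetD _ _ _ _ (hLlen k)]
  rw [hres n]
  exact (L n).2.T_self Tcl

/-- Code for pairs of lists. -/
def code (s t : List ℕ) : ℕ := Encodable.encode (s, t)

lemma code_inj {s t s' t' : List ℕ} (h : code s t = code s' t') : s = s' ∧ t = t' := by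
  have := Encodable.encode_injective h
  exact ⟨congrArg Prod.fst this, congrArg Prod.snd this⟩

/-- The tree coded by `x`. -/
def memT (x : ℕ → ℕ) (t : List ℕ) : Prop :=
  ∀ k ≤ t.length, x (code (res x k) (t.take k)) = 0

lemma memT_take {x : ℕ → ℕ} {t : List ℕ} (h : memT x t) (j : ℕ) : memT x (t.take j) := by
  intro k hk
  have hk' : k ≤ t.length := le_trans hk (by simp)
  have h1 : (t.take j).take k = t.take k := by
    rw [List.take_take]
    congr 1
    simp at hk
    omega
  rw [h1]
  exact h k hk'

/-- The diagonal analytic set. -/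
def Dset : Set (ℕ → ℕ) := {x | ∃ z : ℕ → ℕ, ∀ n, x (code (res x n) (res z n)) = 0}

lemma mem_Dset_iff_branch {x : ℕ → ℕ} : x ∈ Dset ↔ ∃ z : ℕ → ℕ, ∀ n, memT x (res z n) := by
  constructor
  · rintro ⟨z, hz⟩
    refine ⟨z, fun n k hk => ?_⟩
    rw [res_length] at hk
    rw [res_take z hk]
    exact hz k
  · rintro ⟨z, hz⟩
    refine ⟨z, fun n => ?_⟩
    have := hz n n (by rw [res_length])
    rwa [res_take z le_rfl] at this

open Classical in
/-- The map sending `x` to (a code for) the Kleene–Brouwer order on the tree coded by `x`. -/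
noncomputable def gmap (x : ℕ → ℕ) : LOCode :=
  (fun n => if ∃ t, memT x t ∧ Encodable.encode t = n then true else false,
   fun p : ℕ × ℕ => if ∃ t t', memT x t ∧ memT x t' ∧ Encodable.encode t = p.1 ∧
      Encodable.encode t' = p.2 ∧ (t = t' ∨ klt t t') then true else false)

lemma ite_bool_iff (P : Prop) [Decidable P] : (if P then true else false) = true ↔ P := by
  by_cases h : P <;> simp [h]

lemma gmap_dom {x : ℕ → ℕ} {n : ℕ} :
    (gmap x).dom n ↔ ∃ t, memT x t ∧ Encodable.encode t = n := by
  classical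
  simp only [LOCode.dom, gmap]
  exact ite_bool_iff _

lemma gmap_le {x : ℕ → ℕ} {m n : ℕ} :
    (gmap x).le m n ↔ ∃ t t', memT x t ∧ memT x t' ∧ Encodable.encode t = m ∧
      Encodable.encode t' = n ∧ (t = t' ∨ klt t t') := by
  classical
  simp only [LOCode.le, gmap]
  exact ite_bool_iff _

lemma klt_asymm {t t' : List ℕ} (h : klt t t') : ¬ klt t' t :=
  fun h' => klt_irrefl t (klt_trans _ _ _ h h')

lemma gmap_isLO (x : ℕ → ℕ) : (gmap x).IsLO := by
  refine ⟨?_, ?_, ?_, ?_, ?_⟩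
  · intro m n h
    rw [gmap_le] at h
    obtain ⟨t, t', ht, ht', hm, hn, -⟩ := h
    exact ⟨gmap_dom.mpr ⟨t, ht, hm⟩, gmap_dom.mpr ⟨t', ht', hn⟩⟩
  · intro m h
    rw [gmap_dom] at h
    obtain ⟨t, ht, hm⟩ := h
    exact gmap_le.mpr ⟨t, t, ht, ht, hm, hm, Or.inl rfl⟩
  · intro m n h1 h2
    rw [gmap_le] at h1 h2
    obtain ⟨t, t', -, -, hm, hn, h⟩ := h1
    obtain ⟨u, u', -, -, hn', hm', h'⟩ := h2
    have htu' : t = u' := Encodable.encode_injective (hm.trans hm'.symm)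
    have htu : t' = u := Encodable.encode_injective (hn.trans hn'.symm)
    subst htu' htu
    rcases h with rfl | h
    · rw [← hm, ← hn]
    · rcases h' with rfl | h'
      · rw [← hm, ← hn]
      · exact absurd h' (klt_asymm h)
  · intro m n k h1 h2
    rw [gmap_le] at h1 h2 ⊢
    obtain ⟨t, t', ht, ht', hm, hn, h⟩ := h1
    obtain ⟨u, u', hu, hu', hn', hk, h'⟩ := h2
    have : t' = u := Encodable.encode_injective (hn.trans hn'.symm)
    subst this
    refine ⟨t, u', ht, hu', hm, hk, ?_⟩
    rcases h with rfl | h <;> rcases h' with rfl | h'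
    · exact Or.inl rfl
    · exact Or.inr h'
    · exact Or.inr h
    · exact Or.inr (klt_trans _ _ _ h h')
  · intro m n hm hn
    rw [gmap_dom] at hm hn
    obtain ⟨t, ht, hmt⟩ := hm
    obtain ⟨t', ht', hnt⟩ := hn
    by_cases he : t = t'
    · exact Or.inl (gmap_le.mpr ⟨t, t', ht, ht', hmt, hnt, Or.inl he⟩)
    · rcases klt_total t t' he with h | h
      · exact Or.inl (gmap_le.mpr ⟨t, t', ht, ht', hmt, hnt, Or.inr h⟩)
      · exact Or.inr (gmap_le.mpr ⟨t', t, ht', ht, hnt, hmt, Or.inr h⟩)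

lemma gmap_isWO_of_not_mem {x : ℕ → ℕ} (hx : x ∉ Dset) : (gmap x).IsWO := by
  classical
  refine ⟨gmap_isLO x, fun s hs hsdom => ?_⟩
  by_contra hmin
  push_neg at hmin
  -- associate to each element of `s` its tree node
  have hLst : ∀ m ∈ s, ∃ t, memT x t ∧ Encodable.encode t = m := fun m hm =>
    gmap_dom.mp (hsdom m hm)
  -- no minimum: from each element we can descend strictly
  have hstep : ∀ m ∈ s, ∃ m' ∈ s, ∃ t t', memT x t ∧ memT x t' ∧
      Encodable.encode t = m ∧ Encodable.encode t' = m' ∧ klt t' t := by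
    intro m hm
    obtain ⟨m', hm's, hnle⟩ := hmin m hm
    obtain ⟨t, ht, htm⟩ := hLst m hm
    obtain ⟨t', ht', htm'⟩ := hLst m' hm's
    have htot := (gmap_isLO x).2.2.2.2 m m' (hsdom m hm) (hsdom m' hm's)
    have hle : (gmap x).le m' m := htot.resolve_left hnle
    obtain ⟨u', u, hu', hu, henc', henc, hor⟩ := gmap_le.mp hle
    have e1 : u' = t' := Encodable.encode_injective (henc'.trans htm'.symm)
    have e2 : u = t := Encodable.encode_injective (henc.trans htm.symm)
    rw [e1, e2] at hor
    refine ⟨m', hm's, t, t', ht, ht', htm, htm', ?_⟩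
    rcases hor with heq | hor
    · exfalso
      apply hnle
      have hmm : m' = m := by rw [← htm', ← htm, heq]
      rw [hmm]
      exact (gmap_isLO x).2.1 m (hsdom m hm)
    · exact hor
  -- build a strictly descending sequence of nodes
  obtain ⟨m0, hm0⟩ := hs
  choose nxt hnxt_mem tcur tnxt htcur htnxt henc_cur henc_nxt hklt using hstep
  let seq : ℕ → {a : ℕ // a ∈ s} := fun n =>
    Nat.rec ⟨m0, hm0⟩ (fun _ p => ⟨nxt p.1 p.2, hnxt_mem p.1 p.2⟩) n
  have hseq : ∀ n, (seq (n + 1)).1 = nxt (seq n).1 (seq n).2 := fun n => rfl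
  let h : ℕ → List ℕ := fun n => tcur (seq n).1 (seq n).2
  have hT : ∀ n, memT x (h n) := fun n => htcur _ _
  have hdesc : ∀ n, klt (h (n + 1)) (h n) := by
    intro n
    have h1 : Encodable.encode (h (n + 1)) = (seq (n + 1)).1 := henc_cur _ _
    have h2 : Encodable.encode (tnxt (seq n).1 (seq n).2) = nxt (seq n).1 (seq n).2 :=
      henc_nxt _ _
    have h3 : h (n + 1) = tnxt (seq n).1 (seq n).2 := by
      apply Encodable.encode_injective
      rw [h1, h2, hseq n]
    rw [h3]
    exact hklt _ _
  have := branch_of_descending (T := memT x) (fun t k ht => memT_take ht k) hT hdesc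
  exact hx (mem_Dset_iff_branch.mpr this)

lemma gmap_not_isWO_of_mem {x : ℕ → ℕ} (hx : x ∈ Dset) : ¬ (gmap x).IsWO := by
  obtain ⟨z, hz⟩ := mem_Dset_iff_branch.mp hx
  rintro ⟨-, hwo⟩
  set s : Set ℕ := Set.range fun n => Encodable.encode (res z n) with hsdef
  obtain ⟨m, hm, hmin⟩ := hwo s ⟨_, ⟨0, rfl⟩⟩ (by
    rintro n ⟨k, rfl⟩
    exact gmap_dom.mpr ⟨res z k, hz k, rfl⟩)
  obtain ⟨k, hk⟩ := hm
  have := hmin (Encodable.encode (res z (k + 1))) ⟨k + 1, rfl⟩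
  obtain ⟨t, t', ht, ht', henc, henc', hor⟩ := gmap_le.mp this
  have h1 : t = res z k := Encodable.encode_injective (henc.trans hk.symm)
  have h2 : t' = res z (k + 1) := Encodable.encode_injective henc'
  subst h1 h2
  have hpre : res z k <+: res z (k + 1) := by
    rw [← res_take z (Nat.le_succ k)]
    exact List.take_prefix _ _
  rcases hor with heq | hlt
  · have := congrArg List.length heq
    rw [res_length, res_length] at this
    omega
  · exact not_klt_of_prefix _ _ hpre hlt

lemma gmap_isWO_iff {x : ℕ → ℕ} : (gmap x).IsWO ↔ x ∉ Dset := by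
  constructor
  · intro h hx
    exact gmap_not_isWO_of_mem hx h
  · exact gmap_isWO_of_not_mem

lemma res_getElem (x : ℕ → ℕ) (n i : ℕ) (h : i < n) : (res x n).getD i 0 = x i := by
  rw [List.getD_eq_getElem _ _ (by rw [res_length]; exact h)]
  simp [res]

lemma res_ext {x y : ℕ → ℕ} {n : ℕ} (h : ∀ i < n, x i = y i) : res x n = res y n :=
  List.ofFn_inj.mpr (funext fun i => h i i.2)

lemma measurableSet_res_eq (k : ℕ) (l : List ℕ) :
    MeasurableSet {x : ℕ → ℕ | res x k = l} := by
  by_cases hl : l.length = k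
  · have : {x : ℕ → ℕ | res x k = l} = ⋂ i ∈ Finset.range k, {x : ℕ → ℕ | x i = l.getD i 0} := by
      ext x
      simp only [Set.mem_setOf_eq, Set.mem_iInter, Finset.mem_range]
      constructor
      · intro h i hi
        rw [← h, res_getElem x k i hi]
      · intro h
        have h2 : ∀ i < k, x i = (fun j => l.getD j 0) i := fun i hi => h i hi
        have := res_ext (y := fun j => l.getD j 0) (n := k) h2
        rw [this]
        apply List.ext_getElem (by rw [res_length, hl])
        intro i h1 h2
        have hik : i < k := by rwa [res_length] at h1
        have := res_getElem (fun j => l.getD j 0) k i hik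
        rw [List.getD_eq_getElem?_getD, List.getElem?_eq_getElem h1] at this
        simp only [Option.getD_some] at this
        rw [this]
        exact List.getD_eq_getElem l 0 h2
    rw [this]
    exact MeasurableSet.biInter (Set.to_countable _) fun i _ =>
      (measurable_pi_apply i) (measurableSet_singleton _)
  · have : {x : ℕ → ℕ | res x k = l} = ∅ := by
      ext x
      simp only [Set.mem_setOf_eq, Set.mem_empty_iff_false, iff_false]
      intro h
      exact hl (by rw [← h, res_length])
    rw [this]
    exact MeasurableSet.empty

lemma measurableSet_memT (t : List ℕ) : MeasurableSet {x : ℕ → ℕ | memT x t} := by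
  have : {x : ℕ → ℕ | memT x t} =
      ⋂ k, ⋂ (_ : k ≤ t.length), ⋃ l : List ℕ,
        ({x : ℕ → ℕ | res x k = l} ∩ {x : ℕ → ℕ | x (code l (t.take k)) = 0}) := by
    ext x
    simp only [Set.mem_setOf_eq, Set.mem_iInter, Set.mem_iUnion, Set.mem_inter_iff]
    constructor
    · intro h k hk
      exact ⟨res x k, rfl, h k hk⟩
    · rintro h k hk
      obtain ⟨l, hl, h0⟩ := h k hk
      rwa [hl]
  rw [this]
  refine MeasurableSet.iInter fun k => MeasurableSet.iInter fun _ =>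
    MeasurableSet.iUnion fun l => (measurableSet_res_eq k l).inter ?_
  exact (measurable_pi_apply _) (measurableSet_singleton _)

lemma measurable_gmap : Measurable gmap := by
  classical
  apply Measurable.prod
  · apply measurable_pi_iff.mpr
    intro n
    apply Measurable.ite _ measurable_const measurable_const
    have : {x : ℕ → ℕ | ∃ t, memT x t ∧ Encodable.encode t = n} =
        ⋃ t : List ℕ, ({x : ℕ → ℕ | memT x t} ∩ {x : ℕ → ℕ | Encodable.encode t = n}) := by
      ext x; simp [Set.mem_iUnion]
    rw [this]
    refine MeasurableSet.iUnion fun t => (measurableSet_memT t).inter ?_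
    by_cases h : Encodable.encode t = n
    · have : {x : ℕ → ℕ | Encodable.encode t = n} = Set.univ := by ext x; simp [h]
      rw [this]; exact MeasurableSet.univ
    · have : {x : ℕ → ℕ | Encodable.encode t = n} = ∅ := by ext x; simp [h]
      rw [this]; exact MeasurableSet.empty
  · apply measurable_pi_iff.mpr
    intro p
    apply Measurable.ite _ measurable_const measurable_const
    have : {x : ℕ → ℕ | ∃ t t', memT x t ∧ memT x t' ∧ Encodable.encode t = p.1 ∧
        Encodable.encode t' = p.2 ∧ (t = t' ∨ klt t t')} =
        ⋃ tp : List ℕ × List ℕ, ({x : ℕ → ℕ | memT x tp.1} ∩ {x : ℕ → ℕ | memT x tp.2} ∩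
          {x : ℕ → ℕ | Encodable.encode tp.1 = p.1 ∧ Encodable.encode tp.2 = p.2 ∧
            (tp.1 = tp.2 ∨ klt tp.1 tp.2)}) := by
      ext x
      simp only [Set.mem_setOf_eq, Set.mem_iUnion, Set.mem_inter_iff, Prod.exists]
      constructor
      · rintro ⟨t, t', h1, h2, h3, h4, h5⟩
        exact ⟨t, t', ⟨h1, h2⟩, h3, h4, h5⟩
      · rintro ⟨t, t', ⟨h1, h2⟩, h3, h4, h5⟩
        exact ⟨t, t', h1, h2, h3, h4, h5⟩
    rw [this]
    refine MeasurableSet.iUnion fun tp =>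
      (((measurableSet_memT tp.1).inter (measurableSet_memT tp.2)).inter ?_)
    by_cases h : Encodable.encode tp.1 = p.1 ∧ Encodable.encode tp.2 = p.2 ∧
        (tp.1 = tp.2 ∨ klt tp.1 tp.2)
    · have : {x : ℕ → ℕ | Encodable.encode tp.1 = p.1 ∧ Encodable.encode tp.2 = p.2 ∧
          (tp.1 = tp.2 ∨ klt tp.1 tp.2)} = Set.univ := by ext x; simp [h]
      rw [this]; exact MeasurableSet.univ
    · have : {x : ℕ → ℕ | Encodable.encode tp.1 = p.1 ∧ Encodable.encode tp.2 = p.2 ∧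
          (tp.1 = tp.2 ∨ klt tp.1 tp.2)} = ∅ := by ext x; simp [h]
      rw [this]; exact MeasurableSet.empty

lemma measurableSet_eq_LOCode {α : Type*} [MeasurableSpace α] {f g : α → LOCode}
    (hf : Measurable f) (hg : Measurable g) : MeasurableSet {a | f a = g a} := by
  have : {a | f a = g a} = (⋂ n, {a | (f a).1 n = (g a).1 n}) ∩
      ⋂ q : ℕ × ℕ, {a | (f a).2 q = (g a).2 q} := by
    ext a
    simp only [Set.mem_setOf_eq, Set.mem_inter_iff, Set.mem_iInter, Prod.ext_iff, funext_iff]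
  rw [this]
  have hbool : ∀ (b1 b2 : α → Bool), Measurable b1 → Measurable b2 →
      MeasurableSet {a | b1 a = b2 a} := by
    intro b1 b2 h1 h2
    have : {a | b1 a = b2 a} = (b1 ⁻¹' {true} ∩ b2 ⁻¹' {true}) ∪
        (b1 ⁻¹' {false} ∩ b2 ⁻¹' {false}) := by
      ext a
      simp only [Set.mem_setOf_eq, Set.mem_union, Set.mem_inter_iff, Set.mem_preimage,
        Set.mem_singleton_iff]
      cases hb1 : b1 a <;> cases hb2 : b2 a <;> simp
    rw [this]
    exact ((h1 (measurableSet_singleton _)).inter (h2 (measurableSet_singleton _))).union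
      ((h1 (measurableSet_singleton _)).inter (h2 (measurableSet_singleton _)))
  refine MeasurableSet.inter (MeasurableSet.iInter fun n => ?_)
    (MeasurableSet.iInter fun q => ?_)
  · exact hbool _ _ ((measurable_pi_apply n).comp hf.fst) ((measurable_pi_apply n).comp hg.fst)
  · exact hbool _ _ ((measurable_pi_apply q).comp hf.snd) ((measurable_pi_apply q).comp hg.snd)

open Classical in
lemma exists_code_of_analytic {A : Set (ℕ → ℕ)} (hA : AnalyticSet A) :
    ∃ u : ℕ → ℕ, ∀ x, x ∈ A ↔ ∃ z : ℕ → ℕ, ∀ n, u (code (res x n) (res z n)) = 0 := by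
  rw [AnalyticSet_def] at hA
  rcases hA with rfl | ⟨f, hfc, hfr⟩
  · refine ⟨fun _ => 1, fun x => ?_⟩
    simp only [Set.mem_empty_iff_false, false_iff]
    rintro ⟨z, hz⟩
    exact one_ne_zero (hz 0)
  · refine ⟨fun m => if ∃ s t : List ℕ, m = code s t ∧ s.length = t.length ∧
      ∃ w : ℕ → ℕ, res w t.length = t ∧ res (f w) s.length = s then 0 else 1, fun x => ?_⟩
    constructor
    · intro hx
      rw [← hfr] at hx
      obtain ⟨z, rfl⟩ := hx
      refine ⟨z, fun n => if_pos ?_⟩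
      refine ⟨res (f z) n, res z n, rfl, by rw [res_length, res_length], z, ?_, ?_⟩
      · rw [res_length]
      · rw [res_length]
    · rintro ⟨z, hz⟩
      have hw : ∀ n, ∃ w : ℕ → ℕ, res w n = res z n ∧ res (f w) n = res x n := by
        intro n
        have := hz n
        by_cases h : ∃ s t : List ℕ, code (res x n) (res z n) = code s t ∧
            s.length = t.length ∧ ∃ w : ℕ → ℕ, res w t.length = t ∧ res (f w) s.length = s
        · obtain ⟨s, t, hcode, -, w, hw1, hw2⟩ := h
          obtain ⟨hs, ht⟩ := code_inj hcode
          subst hs ht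
          rw [res_length] at hw1 hw2
          exact ⟨w, hw1, hw2⟩
        · have this' : (if ∃ s t : List ℕ, code (res x n) (res z n) = code s t ∧
              s.length = t.length ∧ ∃ w : ℕ → ℕ, res w t.length = t ∧ res (f w) s.length = s
              then 0 else 1) = 0 := this
          rw [if_neg h] at this'
          exact absurd this' one_ne_zero
      choose w hw1 hw2 using hw
      rw [← hfr]
      refine ⟨z, funext fun k => ?_⟩
      have hwz : Tendsto w atTop (nhds z) := by
        rw [tendsto_pi_nhds]
        intro i
        apply Tendsto.congr' _ (tendsto_const_nhds (x := z i))
        filter_upwards [eventually_ge_atTop (i + 1)] with n hn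
        exact (res_eq_res (hw1 n) (by omega)).symm
      have h1 : Tendsto (fun n => f (w n) k) atTop (nhds (f z k)) :=
        tendsto_pi_nhds.mp ((hfc.tendsto z).comp hwz) k
      have h2 : Tendsto (fun n => f (w n) k) atTop (nhds (x k)) := by
        apply Tendsto.congr' _ (tendsto_const_nhds (x := x k))
        filter_upwards [eventually_ge_atTop (k + 1)] with n hn
        exact (res_eq_res (hw2 n) (by omega)).symm
      exact tendsto_nhds_unique h1 h2

lemma omegaStar_le_iff {m n : ℕ} : LOCode.omegaStar.le m n ↔ n ≤ m := by
  simp [LOCode.le, LOCode.omegaStar]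

lemma omegaStar_isLO : LOCode.omegaStar.IsLO := by
  refine ⟨?_, ?_, ?_, ?_, ?_⟩
  · intro m n _
    exact ⟨rfl, rfl⟩
  · intro m _
    exact omegaStar_le_iff.mpr le_rfl
  · intro m n h1 h2
    exact le_antisymm (omegaStar_le_iff.mp h2) (omegaStar_le_iff.mp h1)
  · intro m n k h1 h2
    exact omegaStar_le_iff.mpr (le_trans (omegaStar_le_iff.mp h2) (omegaStar_le_iff.mp h1))
  · intro m n _ _
    rcases le_total m n with h | h
    · exact Or.inr (omegaStar_le_iff.mpr h)
    · exact Or.inl (omegaStar_le_iff.mpr h)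

/-- Any coded linear order that is not a well-order contains a copy of `ω*`. -/
lemma embeds_omegaStar {I : LOCode} (hLO : I.IsLO) (hnWO : ¬ I.IsWO) :
    LOCode.Embeds LOCode.omegaStar I := by
  classical
  have hP : ¬ ∀ s : Set ℕ, s.Nonempty → (∀ n ∈ s, I.dom n) → ∃ m ∈ s, ∀ n ∈ s, I.le m n :=
    fun h => hnWO ⟨hLO, h⟩
  push_neg at hP
  obtain ⟨s, hs, hsdom, hmin⟩ := hP
  have hstep : ∀ m ∈ s, ∃ m' ∈ s, I.le m' m ∧ ¬ I.le m m' := by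
    intro m hm
    obtain ⟨n, hn, hnle⟩ := hmin m hm
    have := hLO.2.2.2.2 m n (hsdom m hm) (hsdom n hn)
    exact ⟨n, hn, this.resolve_left hnle, hnle⟩
  choose nxt hmem hlenxt hnlenxt using hstep
  obtain ⟨m0, hm0⟩ := hs
  let seq : ℕ → {a : ℕ // a ∈ s} := fun n =>
    Nat.rec ⟨m0, hm0⟩ (fun _ p => ⟨nxt p.1 p.2, hmem p.1 p.2⟩) n
  set f : ℕ → ℕ := fun n => (seq n).1 with hf
  have hsucc : ∀ j, I.le (f (j + 1)) (f j) ∧ ¬ I.le (f j) (f (j + 1)) := by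
    intro j
    exact ⟨hlenxt (seq j).1 (seq j).2, hnlenxt (seq j).1 (seq j).2⟩
  have hchain : ∀ k l, k ≤ l → I.le (f l) (f k) := by
    intro k l hkl
    induction l with
    | zero =>
      have : k = 0 := by omega
      subst this
      exact hLO.2.1 _ (hsdom _ (seq 0).2)
    | succ j ih =>
      rcases Nat.le_succ_iff_eq_or_le.mp hkl with heq | hle
      · subst heq
        exact hLO.2.1 _ (hsdom _ (seq (j + 1)).2)
      · exact hLO.2.2.2.1 _ _ _ (hsucc j).1 (ih hle)
  refine ⟨f, fun n _ => hsdom _ (seq n).2, fun m n _ _ => ?_⟩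
  rw [omegaStar_le_iff]
  constructor
  · exact hchain n m
  · intro hle
    by_contra hnm
    have hmn : m + 1 ≤ n := by omega
    have h1 : I.le (f n) (f (m + 1)) := hchain _ _ hmn
    exact (hsucc m).2 (hLO.2.2.2.1 _ _ _ hle h1)

/-- The Lusin–Sierpiński theorem: the set of codes of countable well-orders
is not analytic. -/
lemma not_analytic_woset : ¬ IsAnalyticSet {I : LOCode | I.IsWO} := by
  rintro ⟨B, f, hB, hf, hBf⟩
  have h1 : MeasureTheory.AnalyticSet {I : LOCode | I.IsWO} := by
    rw [← hBf]
    exact hB.analyticSet_image hf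
  rw [MeasureTheory.AnalyticSet_def] at h1
  rcases h1 with hemp | ⟨F, hFc, hFr⟩
  · -- the empty order is a well-order, so the set is not empty
    have hmem : (⟨fun _ => false, fun _ => false⟩ : LOCode) ∈ {I : LOCode | I.IsWO} := by
      refine ⟨⟨?_, ?_, ?_, ?_, ?_⟩, ?_⟩
      · intro m n h
        exact absurd h (by simp [LOCode.le])
      · intro m h
        exact absurd h (by simp [LOCode.dom])
      · intro m n h _
        exact absurd h (by simp [LOCode.le])
      · intro m n k h _
        exact absurd h (by simp [LOCode.le])
      · intro m n h _
        exact absurd h (by simp [LOCode.dom])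
      · rintro s ⟨n, hn⟩ hdom
        exact absurd (hdom n hn) (by simp [LOCode.dom])
    rw [hemp] at hmem
    exact hmem
  · have hmeas : MeasurableSet {p : (ℕ → ℕ) × (ℕ → ℕ) | gmap p.1 = F p.2} :=
      measurableSet_eq_LOCode (measurable_gmap.comp measurable_fst)
        (hFc.measurable.comp measurable_snd)
    have hDc : Dsetᶜ = Prod.fst '' {p : (ℕ → ℕ) × (ℕ → ℕ) | gmap p.1 = F p.2} := by
      ext x
      simp only [Set.mem_compl_iff, Set.mem_image, Set.mem_setOf_eq, Prod.exists]
      constructor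
      · intro hx
        have hwo : (gmap x).IsWO := gmap_isWO_of_not_mem hx
        have : gmap x ∈ Set.range F := by rw [hFr]; exact hwo
        obtain ⟨w, hw⟩ := this
        exact ⟨x, w, hw.symm, rfl⟩
      · rintro ⟨x', w, hp, rfl⟩
        have : gmap x' ∈ Set.range F := ⟨w, hp.symm⟩
        rw [hFr] at this
        exact gmap_isWO_iff.mp this
    have hDca : MeasureTheory.AnalyticSet Dsetᶜ := by
      rw [hDc]
      exact hmeas.analyticSet_image measurable_fst
    obtain ⟨u, hu⟩ := exists_code_of_analytic hDca
    have h2 := hu u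
    by_cases hD : u ∈ Dset
    · exact absurd (h2.mpr hD) (fun h => h hD)
    · exact hD (h2.mp hD)

end LSProof

end LSAux

/-- The section of a family `R ⊆ X × LO` at a linear order code `I`. -/
def LOsection {X : Type*} (R : Set (X × LOCode)) (I : LOCode) : Set X :=
  {x | (x, I) ∈ R}

/-- A family `R ⊆ X × LO` is *refining* if `R_I ⊇ R_{I'}` whenever the linear
order `I` embeds into `I'`. -/
def Refining {X : Type*} (R : Set (X × LOCode)) : Prop :=
  ∀ I J : LOCode, I.IsLO → J.IsLO → LOCode.Embeds I J →
    LOsection R J ⊆ LOsection R I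

/-- If `R ⊆ X × LO` is an analytic refining family (with `X` an analytic subset
of a standard Borel space) whose section at every countable well-order is
nonempty, then its section at `ω*` is nonempty. -/
theorem refining_analytic_family_omegaStar_section_nonempty
    {Z : Type*} [MeasurableSpace Z] [StandardBorelSpace Z]
    (X : Set Z) (hX : IsAnalyticSet X)
    (R : Set (Z × LOCode)) (hRsub : ∀ p ∈ R, p.1 ∈ X ∧ p.2.IsLO)
    (hRan : IsAnalyticSet R) (hRref : Refining R)
    (hne : ∀ I : LOCode, I.IsWO → (LOsection R I).Nonempty) :
    (LOsection R LOCode.omegaStar).Nonempty := by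
  classical
  by_contra hempty
  rw [Set.not_nonempty_iff_eq_empty] at hempty
  have hWOset : {I : LOCode | I.IsWO} = Prod.snd '' R := by
    ext I
    constructor
    · intro hI
      obtain ⟨x, hx⟩ := hne I hI
      exact ⟨(x, I), hx, rfl⟩
    · rintro ⟨⟨x, J⟩, hp, rfl⟩
      have hJLO : J.IsLO := (hRsub _ hp).2
      by_contra hnWO
      have hemb := LSProof.embeds_omegaStar hJLO hnWO
      have hsub := hRref LOCode.omegaStar J LSProof.omegaStar_isLO hJLO hemb
      have hx : x ∈ LOsection R J := hp
      have := hsub hx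
      rw [hempty] at this
      exact this
  obtain ⟨B, fR, hB, hfR, hfBR⟩ := hRan
  refine LSProof.not_analytic_woset ⟨B, Prod.snd ∘ fR, hB, measurable_snd.comp hfR, ?_⟩
  rw [Set.image_comp, hfBR, ← hWOset]
end

section
/- Let X, Y be analytic subsets of standard Borel spaces, K : X → Y an analytic map, E a Borel equivalence relation on X, and (F_α)_{α<ω₁} a uniformly analytic refining family of equivalence relations on Y with intersection F_∞. If K(x) F_∞ K(x') implies x E x' for all x, x' ∈ X, then there exists β < ω₁ such that K(x) F_β K(x') already implies x E x' for all x, x' ∈ X. -/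
/-- `E ⊆ α × α` is an equivalence relation on the subset `A`. -/
def IsEquivOn {α : Type*} (A : Set α) (E : Set (α × α)) : Prop :=
  (∀ a ∈ A, (a, a) ∈ E) ∧ (∀ a b, (a, b) ∈ E → (b, a) ∈ E) ∧
  (∀ a b c, (a, b) ∈ E → (b, c) ∈ E → (a, c) ∈ E)

open Filter Topology MeasureTheory Set

namespace LOCode

lemma isLO_omegaStar : omegaStar.IsLO := by
  refine ⟨fun _ _ _ => ⟨rfl, rfl⟩, ?_, ?_, ?_, ?_⟩ <;>
    simp only [le, omegaStar, decide_eq_true_eq] <;> omega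

lemma exists_descending_of_not_isWO {I : LOCode} (hI : I.IsLO) (hnI : ¬ I.IsWO) :
    ∃ f : ℕ → ℕ, ∀ n, I.dom (f n) ∧ I.le (f (n + 1)) (f n) ∧ ¬ I.le (f n) (f (n + 1)) := by
  simp only [IsWO, hI, true_and, not_forall, not_exists, not_and] at hnI
  obtain ⟨s, ⟨a, ha⟩, hsI, hmin⟩ := hnI
  have hnext : ∀ m, ∃ n, m ∈ s → n ∈ s ∧ ¬ I.le m n := fun m => by
    by_cases hm : m ∈ s
    · obtain ⟨n, hn, hmn⟩ := hmin m hm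
      exact ⟨n, fun _ => ⟨hn, hmn⟩⟩
    · exact ⟨m, fun h => absurd h hm⟩
  choose g hg using hnext
  have hmem : ∀ n, g^[n] a ∈ s := fun n => by
    induction n with
    | zero => exact ha
    | succ n ih => simpa only [Function.iterate_succ_apply'] using (hg _ ih).1
  refine ⟨fun n => g^[n] a, fun n => ⟨hsI _ (hmem n), ?_⟩⟩
  simp only [Function.iterate_succ_apply']
  have hnot := (hg _ (hmem n)).2
  exact ⟨(hI.2.2.2.2 _ _ (hsI _ (hmem n)) (hsI _ (hg _ (hmem n)).1)).resolve_left hnot, hnot⟩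

lemma embeds_omegaStar {I : LOCode} (hI : I.IsLO) (hnI : ¬ I.IsWO) : Embeds omegaStar I := by
  obtain ⟨f, hf⟩ := exists_descending_of_not_isWO hI hnI
  have hchain : ∀ m n, m ≤ n → I.le (f n) (f m) := fun m n hmn => by
    induction n, hmn using Nat.le_induction with
    | base => exact hI.2.1 _ (hf m).1
    | succ n _ ih => exact hI.2.2.2.1 _ _ _ (hf n).2.1 ih
  refine ⟨f, fun n _ => (hf n).1, fun m n _ _ => ?_⟩
  simp only [le, omegaStar, decide_eq_true_eq]
  refine ⟨hchain n m, fun hmn => ?_⟩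
  by_contra! hlt
  exact (hf m).2.2 (hI.2.2.2.1 _ _ _ hmn (hchain (m + 1) n hlt))

section ofKey

variable {β : Type*} [LinearOrder β]

noncomputable def ofKey (key : ℕ → β) (S : Set ℕ) : LOCode := by
  classical
  exact (fun n => decide (n ∈ S), fun p => decide (p.1 ∈ S ∧ p.2 ∈ S ∧ key p.1 ≤ key p.2))

variable {key : ℕ → β} {S : Set ℕ}

@[simp] lemma dom_ofKey {n : ℕ} : (ofKey key S).dom n ↔ n ∈ S := by
  simp [dom, ofKey]

@[simp] lemma le_ofKey {m n : ℕ} : (ofKey key S).le m n ↔ m ∈ S ∧ n ∈ S ∧ key m ≤ key n := by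
  simp [le, ofKey]

lemma isLO_ofKey (hkey : Function.Injective key) : (ofKey key S).IsLO := by
  refine ⟨?_, ?_, ?_, ?_, ?_⟩ <;> simp only [dom_ofKey, le_ofKey]
  · exact fun _ _ h => ⟨h.1, h.2.1⟩
  · exact fun _ h => ⟨h, h, le_rfl⟩
  · exact fun _ _ h h' => hkey (le_antisymm h.2.2 h'.2.2)
  · exact fun _ _ _ h h' => ⟨h.1, h'.2.1, h.2.2.trans h'.2.2⟩
  · exact fun m n hm hn => (le_total (key m) (key n)).imp (⟨hm, hn, ·⟩) (⟨hn, hm, ·⟩)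

lemma isWO_ofKey_iff (hkey : Function.Injective key) : (ofKey key S).IsWO ↔ (key '' S).IsWF := by
  refine ⟨fun ⟨_, hmin⟩ => ?_, fun hWF => ⟨isLO_ofKey hkey, fun s hs hsS => ?_⟩⟩
  · rw [isWF_iff_no_descending_seq]
    intro g hg hgS
    choose n hnS hn using hgS
    obtain ⟨_, ⟨k, rfl⟩, hk⟩ := hmin (range n) (range_nonempty n) (by simpa using hnS)
    have := (le_ofKey.1 (hk _ ⟨k + 1, rfl⟩)).2.2
    rw [hn, hn] at this
    exact (hg k.lt_succ_self).not_ge this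
  · replace hsS : s ⊆ S := fun n hn => dom_ofKey.1 (hsS n hn)
    have hsWF : (key '' s).IsWF := hWF.mono (image_mono hsS)
    obtain ⟨m, hm, hmin⟩ := hsWF.min_mem (hs.image key)
    exact ⟨m, hm, fun n hn =>
      le_ofKey.2 ⟨hsS hm, hsS hn, hmin ▸ hsWF.min_le _ (mem_image_of_mem key hn)⟩⟩

lemma continuous_ofKey {X : Type*} [TopologicalSpace X] (key : ℕ → β) {S : X → Set ℕ}
    (hS : ∀ n x, ∀ᶠ y in 𝓝 x, (n ∈ S y ↔ n ∈ S x)) : Continuous fun x => ofKey key (S x) := by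
  classical
  refine .prodMk (continuous_pi fun n => ?_) (continuous_pi fun p => ?_) <;>
    refine IsLocallyConstant.continuous ((IsLocallyConstant.iff_eventually_eq _).2 fun x => ?_)
  · filter_upwards [hS n x] with y hy
    simp only [hy]
  · filter_upwards [hS p.1 x, hS p.2 x] with y hy₁ hy₂
    simp only [hy₁, hy₂]

end ofKey

end LOCode

def pref (y : ℕ → ℕ) (n : ℕ) : List ℕ := List.ofFn fun i : Fin n => y i

@[simp] lemma length_pref (y : ℕ → ℕ) (n : ℕ) : (pref y n).length = n := List.length_ofFn

@[simp] lemma getElem_pref (y : ℕ → ℕ) {n i : ℕ} (h : i < (pref y n).length) :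
    (pref y n)[i] = y i := List.getElem_ofFn h

lemma pref_eq_pref_iff {y z : ℕ → ℕ} {n : ℕ} : pref y n = pref z n ↔ ∀ i < n, y i = z i := by
  simp [pref, List.ofFn_inj, funext_iff, Fin.forall_iff]

lemma take_pref (y : ℕ → ℕ) {m n : ℕ} (h : m ≤ n) : (pref y n).take m = pref y m :=
  List.ext_getElem (by simp [h]) fun i _ _ => by simp

lemma tendsto_of_pref_eq {z : ℕ → ℕ → ℕ} {y : ℕ → ℕ} (h : ∀ n, pref (z n) n = pref y n) :
    Tendsto z atTop (𝓝 y) := by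
  refine tendsto_pi_nhds.2 fun i => ?_
  rw [nhds_discrete, tendsto_pure, eventually_atTop]
  exact ⟨i + 1, fun n hn => pref_eq_pref_iff.1 (h n) i (by omega)⟩

def HasBranch (T : Set (List ℕ)) : Prop := ∃ y : ℕ → ℕ, ∀ n, pref y n ∈ T

/-- A finite sequence `s` as the infinite sequence `s ++ (⊤, ⊤, …)`; the lexicographic order on
these is the Kleene–Brouwer order, in which proper extensions come first. -/
def kbSeq (s : List ℕ) (i : ℕ) : ℕ∞ := if h : i < s.length then (s[i] : ℕ∞) else ⊤

lemma kbSeq_eq_top_iff {s : List ℕ} {i : ℕ} : kbSeq s i = ⊤ ↔ s.length ≤ i := by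
  unfold kbSeq; split_ifs <;> simp <;> omega

lemma kbSeq_injective : Function.Injective kbSeq := fun s t h => by
  have hlen : ∀ i, s.length ≤ i ↔ t.length ≤ i := fun i => by
    rw [← kbSeq_eq_top_iff, ← kbSeq_eq_top_iff, h]
  refine List.ext_getElem (le_antisymm ((hlen _).2 le_rfl) ((hlen _).1 le_rfl)) fun i hs ht => ?_
  have := congrFun h i
  simpa [kbSeq, hs, ht] using this

lemma kbSeq_pref (y : ℕ → ℕ) (n i : ℕ) : kbSeq (pref y n) i = if i < n then (y i : ℕ∞) else ⊤ := by
  simp only [kbSeq, length_pref]; split_ifs <;> simp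

def kbKey (s : List ℕ) : Lex (ℕ → ℕ∞) := toLex (kbSeq s)

lemma kbKey_injective : Function.Injective kbKey := kbSeq_injective

lemma kbKey_pref_succ_lt (y : ℕ → ℕ) (n : ℕ) : kbKey (pref y (n + 1)) < kbKey (pref y n) :=
  ⟨n, fun j hj => by simp [kbKey, kbSeq_pref, hj, hj.trans n.lt_succ_self],
    by simp [kbKey, kbSeq_pref]⟩

lemma take_eq_pref_of_kbSeq {s : List ℕ} {y : ℕ → ℕ} {k : ℕ}
    (h : ∀ i < k, kbSeq s i = y i) : s.take k = pref y k := by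
  have hlen : k ≤ s.length := by
    rcases k with _ | k
    · exact Nat.zero_le _
    · by_contra! hk
      simpa [kbSeq_eq_top_iff.2 (Nat.le_of_lt_succ hk)] using h k k.lt_succ_self
  refine List.ext_getElem (by simp [hlen]) fun i hi _ => ?_
  have hik : i < k := by simpa [hlen] using hi
  have := h i hik
  simp only [kbSeq, show i < s.length by omega, dif_pos, Nat.cast_inj] at this
  simp [this]

lemma Pi.Lex.exists_eventually_apply_eq {β : Type*} [LinearOrder β] [WellFoundedLT β]
    {σ : ℕ → Lex (ℕ → β)} (hσ : Antitone σ) (i : ℕ) :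
    ∃ b, ∀ᶠ n in atTop, ofLex (σ n) i = b := by
  induction i using Nat.strong_induction_on with
  | _ i ih =>
    have hlow : ∀ᶠ n in atTop, ∀ j < i, ofLex (σ (n + 1)) j = ofLex (σ n) j := by
      refine (finite_lt_nat i).eventually_all.2 fun j hj => ?_
      obtain ⟨b, hb⟩ := ih j hj
      filter_upwards [hb, (tendsto_add_atTop_nat 1).eventually hb] with n h₀ h₁
      exact h₁.trans h₀.symm
    obtain ⟨N, hN⟩ := eventually_atTop.1 hlow
    have hanti : Antitone fun m => ofLex (σ (N + m)) i := antitone_nat_of_succ_le fun m => by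
      rcases (hσ (Nat.le_succ (N + m))).eq_or_lt with heq | ⟨k, hk, hlt⟩
      · exact (congrFun (congrArg ofLex heq) i).le
      · rcases lt_trichotomy k i with hki | rfl | hik
        · exact (hlt.ne (hN (N + m) (by omega) k hki)).elim
        · exact hlt.le
        · exact (hk i hik).le
    obtain ⟨m, hm⟩ := WellFoundedLT.antitone_chain_condition hanti
    refine ⟨ofLex (σ (N + m)) i, eventually_atTop.2 ⟨N + m, fun n hn => ?_⟩⟩
    simpa [Nat.add_sub_cancel' (le_of_add_le_left hn)] using (hm (n - N) (by omega)).symm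

lemma hasBranch_of_strictAnti {T : Set (List ℕ)} (hT : ∀ t ∈ T, ∀ k, t.take k ∈ T)
    {f : ℕ → List ℕ} (hfT : ∀ n, f n ∈ T) (hf : StrictAnti (kbKey ∘ f)) : HasBranch T := by
  choose b hb using Pi.Lex.exists_eventually_apply_eq hf.antitone
  have hprefix : ∀ k, ∀ᶠ n in atTop, ∀ i < k, kbSeq (f n) i = b i :=
    fun k => (finite_lt_nat k).eventually_all.2 fun i _ => hb i
  -- a coordinate `⊤` of the limit would make `f` eventually constant
  have hfin : ∀ i, b i ≠ ⊤ := by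
    intro i hi
    obtain ⟨n, hn, hn'⟩ :=
      ((hprefix (i + 1)).and ((tendsto_add_atTop_nat 1).eventually (hprefix (i + 1)))).exists
    have hlen : ∀ m ∈ ({n, n + 1} : Set ℕ), (f m).length ≤ i := by
      rintro m (rfl | rfl) <;> rw [← kbSeq_eq_top_iff, ← hi]
      exacts [hn i i.lt_succ_self, hn' i i.lt_succ_self]
    have heq : f (n + 1) = f n := kbSeq_injective <| funext fun j => by
      by_cases hj : j < i + 1
      · rw [hn j hj, hn' j hj]
      · rw [kbSeq_eq_top_iff.2 ((hlen _ (by simp)).trans (by omega)),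
          kbSeq_eq_top_iff.2 ((hlen _ (by simp)).trans (by omega))]
    exact (hf n.lt_succ_self).ne (congrArg kbKey heq)
  refine ⟨fun i => (b i).toNat, fun k => ?_⟩
  obtain ⟨n, hn⟩ := (hprefix k).exists
  rw [← take_eq_pref_of_kbSeq fun i hi => by rw [hn i hi, ENat.natCast_toNat (hfin i)]]
  exact hT _ (hfT n) k

theorem isWF_image_kbKey_iff {T : Set (List ℕ)} (hT : ∀ t ∈ T, ∀ k, t.take k ∈ T) :
    (kbKey '' T).IsWF ↔ ¬ HasBranch T := by
  refine isWF_iff_no_descending_seq.trans ⟨fun h ⟨y, hy⟩ => ?_, fun h g hg hgT => h ?_⟩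
  · exact h _ (strictAnti_nat_of_succ_lt (kbKey_pref_succ_lt y)) fun n => mem_image_of_mem _ (hy n)
  · choose f hfT hf using hgT
    exact hasBranch_of_strictAnti hT hfT (by rwa [show kbKey ∘ f = g from funext hf])

def codeTree (c x : ℕ → ℕ) : Set (List ℕ) :=
  {t | ∀ m ≤ t.length, c (Encodable.encode (pref x m, t.take m)) ≠ 0}

lemma take_mem_codeTree {c x : ℕ → ℕ} {t : List ℕ} (ht : t ∈ codeTree c x) (k : ℕ) :
    t.take k ∈ codeTree c x := fun m hm => by
  rw [List.take_take, min_eq_left (hm.trans (by simp))]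
  exact ht m (hm.trans (by simp))

lemma hasBranch_codeTree_iff {c x : ℕ → ℕ} :
    HasBranch (codeTree c x) ↔ ∃ y, ∀ n, c (Encodable.encode (pref x n, pref y n)) ≠ 0 := by
  refine exists_congr fun y => ⟨fun hy n => ?_, fun hy n m hm => ?_⟩
  · simpa [take_pref y le_rfl] using hy n n (by simp)
  · rw [length_pref] at hm
    simpa [take_pref y hm] using hy m

lemma exists_hasBranch_codeTree_iff {S : Set (ℕ → ℕ)} (hS : AnalyticSet S) :
    ∃ c, ∀ x, x ∈ S ↔ HasBranch (codeTree c x) := by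
  simp only [hasBranch_codeTree_iff]
  rw [AnalyticSet_def] at hS
  rcases hS with rfl | ⟨f, hf, rfl⟩
  · exact ⟨0, by simp⟩
  classical
  -- `c` accepts `(s, t)` iff the cylinder of `t` meets the preimage of the cylinder of `s`
  refine ⟨fun k => if (fun p : List ℕ × List ℕ => ∃ z, pref z p.2.length = p.2 ∧
      pref (f z) p.2.length = p.1) (Denumerable.ofNat _ k) then 1 else 0, fun x => ?_⟩
  simp only [Denumerable.ofNat_encode, length_pref, ne_eq, ite_eq_right_iff, one_ne_zero,
    imp_false, not_not]
  refine ⟨fun ⟨y, hy⟩ => ⟨y, fun n => ⟨y, rfl, hy ▸ rfl⟩⟩, fun ⟨y, hy⟩ => ?_⟩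
  choose z hz₁ hz₂ using hy
  exact ⟨y, tendsto_nhds_unique ((hf.tendsto y).comp (tendsto_of_pref_eq hz₁))
    (tendsto_of_pref_eq hz₂)⟩

lemma not_analyticSet_setOf_not_hasBranch : ¬ AnalyticSet {x | ¬ HasBranch (codeTree x x)} :=
  fun h => by
    obtain ⟨c, hc⟩ := exists_hasBranch_codeTree_iff h
    exact iff_not_self (hc c).symm

lemma eventually_mem_codeTree_iff (t : List ℕ) (x : ℕ → ℕ) :
    ∀ᶠ y in 𝓝 x, (t ∈ codeTree y y ↔ t ∈ codeTree x x) := by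
  have hcoord : ∀ i, ∀ᶠ y in 𝓝 x, y i = x i := fun i =>
    (continuous_apply i).continuousAt ((isOpen_discrete {x i}).mem_nhds rfl)
  have h₁ : ∀ᶠ y in 𝓝 x, ∀ i < t.length, y i = x i :=
    (finite_lt_nat _).eventually_all.2 fun i _ => hcoord i
  have h₂ : ∀ᶠ y in 𝓝 x, ∀ m ≤ t.length, y (Encodable.encode (pref x m, t.take m)) =
      x (Encodable.encode (pref x m, t.take m)) :=
    (finite_le_nat _).eventually_all.2 fun m _ => hcoord _
  filter_upwards [h₁, h₂] with y hy₁ hy₂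
  refine forall₂_congr fun m hm => ?_
  rw [pref_eq_pref_iff.2 fun i hi => hy₁ i (by omega), hy₂ m hm]

noncomputable def kbCode (x : ℕ → ℕ) : LOCode :=
  LOCode.ofKey (kbKey ∘ Denumerable.ofNat (List ℕ)) (Denumerable.ofNat (List ℕ) ⁻¹' codeTree x x)

lemma isWO_kbCode_iff {x : ℕ → ℕ} : (kbCode x).IsWO ↔ ¬ HasBranch (codeTree x x) := by
  rw [kbCode, LOCode.isWO_ofKey_iff (kbKey_injective.comp
    (Function.LeftInverse.injective Denumerable.encode_ofNat)),
    image_comp, image_preimage_eq _ fun t => ⟨_, Denumerable.ofNat_encode t⟩]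
  exact isWF_image_kbKey_iff fun _ ht k => take_mem_codeTree ht k

lemma continuous_kbCode : Continuous kbCode :=
  LOCode.continuous_ofKey _ fun _ x => eventually_mem_codeTree_iff _ x

theorem not_analyticSet_setOf_isWO : ¬ AnalyticSet {I : LOCode | I.IsWO} := fun h =>
  not_analyticSet_setOf_not_hasBranch <| by
    simpa only [preimage_ofPred_eq, isWO_kbCode_iff] using h.preimage continuous_kbCode

section Counterexamples

variable {Z W L : Type*}

def counterexampleCodes (G : Set (Z × W)) (R : Set ((W × W) × L)) (E : Set (Z × Z)) : Set L :=
  {I | ∃ p ∈ G, ∃ q ∈ G, ((p.2, q.2), I) ∈ R ∧ (p.1, q.1) ∉ E}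

lemma analyticSet_counterexampleCodes [MeasurableSpace Z] [MeasurableSpace W]
    [StandardBorelSpace W] [MeasurableSpace L] [TopologicalSpace L] [OpensMeasurableSpace L]
    [SecondCountableTopology L] {G : Set (Z × W)} (hG : IsAnalyticSet G)
    {R : Set ((W × W) × L)} (hR : IsAnalyticSet R) {E : Set (Z × Z)} (hE : MeasurableSet E) :
    AnalyticSet (counterexampleCodes G R E) := by
  obtain ⟨B, g, hB, hg, rfl⟩ := hG
  obtain ⟨C, r, hC, hr, rfl⟩ := hR
  let P : Set ((ℕ → ℕ) × (ℕ → ℕ) × (ℕ → ℕ)) :=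
    {q | q.1 ∈ B ∧ q.2.1 ∈ B ∧ q.2.2 ∈ C ∧ (g q.1).2 = (r q.2.2).1.1 ∧
      (g q.2.1).2 = (r q.2.2).1.2 ∧ ((g q.1).1, (g q.2.1).1) ∉ E}
  have hP : MeasurableSet P :=
    (hB.preimage (by fun_prop)).inter <| (hB.preimage (by fun_prop)).inter <|
      (hC.preimage (by fun_prop)).inter <|
      (measurableSet_eq_fun (by fun_prop) (by fun_prop)).inter <|
      (measurableSet_eq_fun (by fun_prop) (by fun_prop)).inter (hE.compl.preimage (by fun_prop))
  convert hP.analyticSet_image (f := fun q => (r q.2.2).2) (by fun_prop) using 1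
  ext I
  constructor
  · rintro ⟨_, ⟨a, ha, rfl⟩, _, ⟨b, hb, rfl⟩, ⟨d, hd, hrd⟩, hab⟩
    exact ⟨(a, b, d), ⟨ha, hb, hd, by rw [hrd], by rw [hrd], hab⟩, congrArg Prod.snd hrd⟩
  · rintro ⟨⟨a, b, d⟩, ⟨ha, hb, hd, h₁, h₂, hab⟩, rfl⟩
    exact ⟨g a, mem_image_of_mem g ha, g b, mem_image_of_mem g hb, ⟨d, hd, by rw [h₁, h₂]⟩, hab⟩

end Counterexamples

theorem transfer_of_classification_down_general
    {Z W : Type*} [MeasurableSpace Z]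
    [MeasurableSpace W] [StandardBorelSpace W]
    (X : Set Z)
    (K : Z → W)
    (hKan : IsAnalyticSet {p : Z × W | p.1 ∈ X ∧ p.2 = K p.1})
    (E : Set (Z × Z)) (hE : MeasurableSet E)
    (R : Set ((W × W) × LOCode)) (hRan : IsAnalyticSet R) (hRref : Refining R)
    (hRLO : ∀ p ∈ R, p.2.IsLO)
    (h : ∀ x ∈ X, ∀ x' ∈ X,
      (K x, K x') ∈ LOsection R LOCode.omegaStar → (x, x') ∈ E) :
    ∃ I : LOCode, I.IsWO ∧ ∀ x ∈ X, ∀ x' ∈ X,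
      (K x, K x') ∈ LOsection R I → (x, x') ∈ E := by
  by_contra! hcon
  set A := counterexampleCodes {p : Z × W | p.1 ∈ X ∧ p.2 = K p.1} R E
  have hWO : {I : LOCode | I.IsWO} ⊆ A := fun I hI => by
    obtain ⟨x, hx, x', hx', hxI, hxE⟩ := hcon I hI
    exact ⟨(x, K x), ⟨hx, rfl⟩, (x', K x'), ⟨hx', rfl⟩, hxI, hxE⟩
  obtain ⟨I, ⟨⟨x, w⟩, ⟨hx, hw⟩, ⟨x', w'⟩, ⟨hx', hw'⟩, hxI, hxE⟩, hI⟩ : ∃ I ∈ A, ¬ I.IsWO := by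
    by_contra! hA
    exact not_analyticSet_setOf_isWO
      (subset_antisymm hWO hA ▸ analyticSet_counterexampleCodes hKan hRan hE)
  obtain rfl : w = K x := hw
  obtain rfl : w' = K x' := hw'
  have hILO : I.IsLO := hRLO _ hxI
  exact hxE (h x hx x' hx'
    (hRref _ _ LOCode.isLO_omegaStar hILO (LOCode.embeds_omegaStar hILO hI) hxI))

/-- **Transfer theorem.**  Let `X ⊆ Z`, `Y ⊆ W` be analytic subsets of standard
Borel spaces, `K : X → Y` an analytic map, `E` a Borel equivalence relation on
`X`, and `(F_α)_{α<ω₁}` a uniformly analytic refining family of equivalence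
relations on `Y`, given by an analytic refining set `R ⊆ Y² × LO` with
`F_α = R_α` at countable well-orders and `R_{ω*} = ⋂_{α<ω₁} F_α = F_∞`.
If `K(x) F_∞ K(x')` implies `x E x'` for all `x, x' ∈ X`, then there is a
countable ordinal `β` (coded by a countable well-order) such that already
`K(x) F_β K(x')` implies `x E x'` for all `x, x' ∈ X`. -/
theorem transfer_of_classification_down
    {Z W : Type*} [MeasurableSpace Z] [StandardBorelSpace Z]
    [MeasurableSpace W] [StandardBorelSpace W]
    (X : Set Z) (Y : Set W) (hX : IsAnalyticSet X) (hY : IsAnalyticSet Y)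
    (K : Z → W) (hKY : ∀ x ∈ X, K x ∈ Y)
    (hKan : IsAnalyticSet {p : Z × W | p.1 ∈ X ∧ p.2 = K p.1})
    (E : Set (Z × Z)) (hE : MeasurableSet E) (hEeq : IsEquivOn X E)
    (R : Set ((W × W) × LOCode)) (hRan : IsAnalyticSet R) (hRref : Refining R)
    (hRLO : ∀ p ∈ R, p.2.IsLO)
    (hFeq : ∀ I : LOCode, I.IsWO → IsEquivOn Y (LOsection R I))
    (hFinf : LOsection R LOCode.omegaStar = ⋂ I ∈ {I : LOCode | I.IsWO}, LOsection R I)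
    (h : ∀ x ∈ X, ∀ x' ∈ X,
      (K x, K x') ∈ LOsection R LOCode.omegaStar → (x, x') ∈ E) :
    ∃ I : LOCode, I.IsWO ∧ ∀ x ∈ X, ∀ x' ∈ X,
      (K x, K x') ∈ LOsection R I → (x, x') ∈ E :=
  transfer_of_classification_down_general X K hKan E hE R hRan hRref hRLO h
end

section
/- A function between standard Borel spaces whose graph is an analytic subset of the product is a Borel function. -/
/-!
The preimage of a Borel set `s` under `f` is the projection of the analytic set
`graph f ∩ (X × s)`, hence analytic; the same holds for `sᶜ`, whose preimage is the complement
of `f ⁻¹' s`. By Suslin's theorem `f ⁻¹' s` is Borel.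
-/

open MeasureTheory Set

namespace IsAnalyticSet

variable {X Y : Type*} [MeasurableSpace X] [MeasurableSpace Y]

theorem image {s : Set X} (hs : IsAnalyticSet s) {f : X → Y} (hf : Measurable f) :
    IsAnalyticSet (f '' s) := by
  obtain ⟨B, g, hB, hg, rfl⟩ := hs
  exact ⟨B, f ∘ g, hB, hf.comp hg, image_comp f g B⟩

theorem inter_measurableSet {s t : Set X} (hs : IsAnalyticSet s) (ht : MeasurableSet t) :
    IsAnalyticSet (s ∩ t) := by
  obtain ⟨B, g, hB, hg, rfl⟩ := hs
  exact ⟨B ∩ g ⁻¹' t, g, hB.inter (hg ht), hg, image_inter_preimage g B t⟩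

theorem analyticSet [TopologicalSpace X] [OpensMeasurableSpace X] [SecondCountableTopology X]
    {s : Set X} (hs : IsAnalyticSet s) : AnalyticSet s := by
  obtain ⟨B, g, hB, hg, rfl⟩ := hs
  exact hB.analyticSet_image hg

theorem measurableSet_of_compl [StandardBorelSpace X] {s : Set X} (hs : IsAnalyticSet s)
    (hsc : IsAnalyticSet sᶜ) : MeasurableSet s := by
  let := upgradeStandardBorel X
  exact hs.analyticSet.measurableSet_of_compl hsc.analyticSet

theorem preimage_of_graph {f : X → Y} (h : IsAnalyticSet {p : X × Y | p.2 = f p.1})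
    {s : Set Y} (hs : MeasurableSet s) : IsAnalyticSet (f ⁻¹' s) := by
  have hpre : f ⁻¹' s = Prod.fst '' ({p : X × Y | p.2 = f p.1} ∩ Prod.snd ⁻¹' s) := by
    ext x
    simp
  rw [hpre]
  exact (h.inter_measurableSet (measurable_snd hs)).image measurable_fst

end IsAnalyticSet

theorem measurable_of_analytic_graph_general
    {X Y : Type*} [MeasurableSpace X] [StandardBorelSpace X]
    [MeasurableSpace Y]
    (f : X → Y) (h : IsAnalyticSet {p : X × Y | p.2 = f p.1}) :
    Measurable f := by
  intro s hs
  have hsc : IsAnalyticSet (f ⁻¹' s)ᶜ := by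
    simpa only [preimage_compl] using h.preimage_of_graph hs.compl
  exact (h.preimage_of_graph hs).measurableSet_of_compl hsc

/-- A function between standard Borel spaces whose graph is an analytic subset
of the product is a Borel function. -/
theorem measurable_of_analytic_graph
    {X Y : Type*} [MeasurableSpace X] [StandardBorelSpace X]
    [MeasurableSpace Y] [StandardBorelSpace Y]
    (f : X → Y) (h : IsAnalyticSet {p : X × Y | p.2 = f p.1}) :
    Measurable f :=
  measurable_of_analytic_graph_general f h
end
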